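/- arXiv:math/0608309 — 5 statements merged into one kernel-verified Lean document; each statement's English description precedes it below -/
import Mathlib

section
/- Fix M ∈ ℕ and work in R = MvPowerSeries (Fin M) ℂ with the product topology (ℂ discrete). Let J : R → R be a ℂ-linear continuous map which is asymptotically contractive in the sense that for all multi-indices j, k ∈ ℕ^M, if the coefficient of X^k in J(X^j) is nonzero then j < k (componentwise ≤ and j ≠ k). Then for every S₀ ∈ R the fixed point equation S = J(S) + S₀ has a unique solution S ∈ R. -/
/-- The product (coefficient-wise) topology on `MvPowerSeries (Fin M) ℂ`, where the
coefficient field `ℂ` carries the *discrete* topology. -/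
noncomputable instance mvPowerSeriesDiscretePiTopology (M : ℕ) :
    TopologicalSpace (MvPowerSeries (Fin M) ℂ) :=
  @Pi.topologicalSpace ((Fin M) →₀ ℕ) (fun _ => ℂ) (fun _ => ⊥)

/-!
Continuity of `J` means that each coefficient of `J S` depends on only finitely many
coefficients of `S`; by linearity and contractivity, the `k`-th coefficient of `J S` then
depends only on the coefficients of `S` at indices strictly below `k`. As `<` on `ℕ^M` is
well-founded, the equation `S = J S + S₀` determines the coefficients of `S` recursively.
-/

theorem WellFoundedLT.existsUnique_eq_apply_of_forall_lt {α β : Type*} [Preorder α]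
    [WellFoundedLT α] [Nonempty β] {F : (α → β) → α → β}
    (hF : ∀ f g k, (∀ j < k, f j = g j) → F f k = F g k) : ∃! f, f = F f := by
  classical
  let f : α → β := WellFoundedLT.fix fun k ih =>
    F (fun j => if h : j < k then ih j h else Classical.arbitrary β) k
  have hf : ∀ k, f k = F (fun j => if j < k then f j else Classical.arbitrary β) k :=
    WellFoundedLT.fix_eq _
  refine ⟨f, funext fun k => ?_, fun g hg => funext fun k => ?_⟩
  · exact (hf k).trans (hF _ _ _ fun j hj => if_pos hj)
  · induction k using WellFoundedLT.induction with
    | ind k ih =>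
      rw [hg, hf]
      exact hF _ _ _ fun j hj => by rw [if_pos hj, ih j hj]

namespace MvPowerSeries

section Contractive

variable {σ R : Type*} [CommRing R] {J : MvPowerSeries σ R →ₗ[R] MvPowerSeries σ R}
  {k : σ →₀ ℕ} (I : Finset (σ →₀ ℕ))

theorem coeff_map_eq_zero_of_forall_lt
    (hI : ∀ S, (∀ i ∈ I, coeff i S = 0) → coeff k (J S) = 0)
    (hJ : ∀ j, coeff k (J (monomial j 1)) ≠ 0 → j < k)
    {S : MvPowerSeries σ R} (hS : ∀ j < k, coeff j S = 0) : coeff k (J S) = 0 := by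
  classical
  set T := ∑ i ∈ I, monomial i (coeff i S)
  have hT : coeff k (J T) = 0 := by
    rw [map_sum, map_sum]
    refine Finset.sum_eq_zero fun i _ => ?_
    by_cases hik : i < k
    · rw [hS i hik, map_zero, map_zero, map_zero]
    · rw [← mul_one (coeff i S), ← smul_eq_mul, map_smul, map_smul, map_smul,
        not_imp_comm.mp (hJ i) hik, smul_zero]
  have hST : coeff k (J (S - T)) = 0 := hI _ fun i hi => by
    simp [T, coeff_monomial, hi]
  rw [← sub_add_cancel S T, map_add, map_add, hST, hT, add_zero]

theorem coeff_map_eq_of_forall_lt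
    (hI : ∀ S, (∀ i ∈ I, coeff i S = 0) → coeff k (J S) = 0)
    (hJ : ∀ j, coeff k (J (monomial j 1)) ≠ 0 → j < k)
    {S T : MvPowerSeries σ R} (hST : ∀ j < k, coeff j S = coeff j T) :
    coeff k (J S) = coeff k (J T) := by
  rw [← sub_eq_zero, ← map_sub, ← map_sub]
  exact coeff_map_eq_zero_of_forall_lt I hI hJ fun j hj => by rw [map_sub, hST j hj, sub_self]

end Contractive

theorem exists_finset_coeff_map_eq_zero_of_continuous {M : ℕ}
    {J : MvPowerSeries (Fin M) ℂ →ₗ[ℂ] MvPowerSeries (Fin M) ℂ} (hJ : Continuous J)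
    (k : Fin M →₀ ℕ) :
    ∃ I : Finset (Fin M →₀ ℕ), ∀ S, (∀ i ∈ I, coeff i S = 0) → coeff k (J S) = 0 := by
  let _ : TopologicalSpace ℂ := ⊥
  have : DiscreteTopology ℂ := ⟨rfl⟩
  have hopen : IsOpen {S : (Fin M →₀ ℕ) → ℂ | coeff k (J S) = 0} :=
    (isOpen_discrete {0}).preimage ((continuous_apply k).comp hJ)
  obtain ⟨I, u, hu, hsub⟩ := isOpen_pi_iff.mp hopen 0 (map_zero (coeff k ∘ₗ J))
  exact ⟨I, fun S hS => hsub fun i hi => (show S i = 0 from hS i hi) ▸ (hu i hi).2⟩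

end MvPowerSeries

/-- Contractive mapping principle (linear case): if `J` is a continuous linear operator
on formal multiseries which is asymptotically contractive (it strictly raises the
multi-index of every monomial), then for every `S₀` the fixed point equation
`S = J S + S₀` has a unique solution. -/
theorem stmt_7 (M : ℕ)
    (J : MvPowerSeries (Fin M) ℂ →ₗ[ℂ] MvPowerSeries (Fin M) ℂ)
    (hJcont : Continuous J)
    (hJcontr : ∀ j k : (Fin M) →₀ ℕ,
      MvPowerSeries.coeff (R := ℂ) k (J (MvPowerSeries.monomial (R := ℂ) j 1)) ≠ 0 → j < k)
    (S₀ : MvPowerSeries (Fin M) ℂ) :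
    ∃! S : MvPowerSeries (Fin M) ℂ, S = J S + S₀ := by
  refine WellFoundedLT.existsUnique_eq_apply_of_forall_lt
    (F := fun S k => MvPowerSeries.coeff k (J S + S₀)) fun S T k hST => ?_
  obtain ⟨I, hI⟩ := MvPowerSeries.exists_finset_coeff_map_eq_zero_of_continuous hJcont k
  simp only [map_add, MvPowerSeries.coeff_map_eq_of_forall_lt I hI (hJcontr · k) hST]
end

section
/- Fix M ∈ ℕ and work in R = MvPowerSeries (Fin M) ℂ with the product topology (ℂ discrete). Let S ∈ R and let (S_n)_{n ∈ ℕ} be a sequence in R, all with zero constant coefficient. Then there exists a unique y ∈ R with zero constant coefficient such that the family n ↦ S_{n−2} · y^n (n ≥ 2) is summable and y = S + Σ_{n ≥ 2} S_{n−2} y^n. -/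
theorem WellFounded.existsUnique_isFixedPt {ι α : Type*} [Nonempty α] {r : ι → ι → Prop}
    (hr : WellFounded r) {Φ : (ι → α) → ι → α}
    (hΦ : ∀ a b i, (∀ j, r j i → a j = b j) → Φ a i = Φ b i) :
    ∃! y, Function.IsFixedPt Φ y := by
  classical
  let y : ι → α := hr.fix fun i rec ↦
    Φ (fun j ↦ if h : r j i then rec j h else Classical.arbitrary α) i
  have hy : Function.IsFixedPt Φ y := funext fun i ↦ by
    rw [show y i = _ from hr.fix_eq _ i]
    exact hΦ _ _ i fun j hj ↦ by rw [dif_pos hj]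
  refine ⟨y, hy, fun z hz ↦ funext fun i ↦ ?_⟩
  induction i using hr.induction with
  | _ i ih => rw [← hz, ← hy]; exact hΦ z y i ih

open Finset

namespace MvPowerSeries

variable {σ R : Type*}

section CommSemiring

variable [CommSemiring R]

noncomputable def degreeSum (f : ℕ → MvPowerSeries σ R) : MvPowerSeries σ R :=
  fun d ↦ ∑ n ∈ range d.degree, coeff d (f n)

theorem coeff_degreeSum (f : ℕ → MvPowerSeries σ R) (d : σ →₀ ℕ) :
    coeff d (degreeSum f) = ∑ n ∈ range d.degree, coeff d (f n) :=
  rfl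

theorem constantCoeff_degreeSum (f : ℕ → MvPowerSeries σ R) :
    constantCoeff (degreeSum f) = 0 := by
  rw [← coeff_zero_eq_constantCoeff_apply, coeff_degreeSum]
  simp

theorem WithPiTopology.hasSum_degreeSum [TopologicalSpace R] {f : ℕ → MvPowerSeries σ R}
    (hf : ∀ n : ℕ, (n : ℕ∞) < (f n).order) : HasSum f (degreeSum f) := by
  refine hasSum_iff_hasSum_coeff.2 fun d ↦ ?_
  rw [coeff_degreeSum]
  refine hasSum_sum_of_ne_finset_zero fun n hn ↦ coeff_of_lt_order ?_
  exact (Nat.cast_le.2 (not_lt.1 (mem_range.not.1 hn))).trans_lt (hf n)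

noncomputable def fixedPointMap (S : MvPowerSeries σ R) (T : ℕ → MvPowerSeries σ R)
    (a : MvPowerSeries σ R) : MvPowerSeries σ R :=
  S + degreeSum fun n ↦ T n * a ^ (n + 2)

namespace WithPiTopology

variable [TopologicalSpace R]

theorem hasSum_mul_pow_add_two (T : ℕ → MvPowerSeries σ R) {y : MvPowerSeries σ R}
    (hy : constantCoeff y = 0) :
    HasSum (fun n ↦ T n * y ^ (n + 2)) (degreeSum fun n ↦ T n * y ^ (n + 2)) :=
  hasSum_degreeSum fun n ↦
    calc (n : ℕ∞) < (n + 2 : ℕ) := by norm_cast; omega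
      _ ≤ (y ^ (n + 2)).order := le_order_pow_of_constantCoeff_eq_zero _ hy
      _ ≤ (T n * y ^ (n + 2)).order := le_add_self.trans le_order_mul

theorem isFixedPt_fixedPointMap_iff [T2Space R] {S : MvPowerSeries σ R}
    (T : ℕ → MvPowerSeries σ R) (hS : constantCoeff S = 0) {y : MvPowerSeries σ R} :
    Function.IsFixedPt (fixedPointMap S T) y ↔ constantCoeff y = 0 ∧
      Summable (fun n ↦ T n * y ^ (n + 2)) ∧ y = S + ∑' n, T n * y ^ (n + 2) := by
  constructor
  · intro hy
    have hy0 : constantCoeff y = 0 := by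
      rw [← hy, fixedPointMap, map_add, hS, constantCoeff_degreeSum, add_zero]
    have hsum := hasSum_mul_pow_add_two T hy0
    exact ⟨hy0, hsum.summable, by rw [hsum.tsum_eq]; exact hy.symm⟩
  · rintro ⟨hy0, -, hy⟩
    rw [Function.IsFixedPt, fixedPointMap, ← (hasSum_mul_pow_add_two T hy0).tsum_eq, ← hy]

end WithPiTopology

end CommSemiring

section CommRing

variable [CommRing R]

theorem add_one_le_order_mul_pow_sub_pow {c : MvPowerSeries σ R} (hc : constantCoeff c = 0)
    (a b : MvPowerSeries σ R) (k : ℕ) : (a - b).order + 1 ≤ (c * (a ^ k - b ^ k)).order := by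
  obtain ⟨q, hq⟩ := sub_dvd_pow_sub_pow a b k
  have hdvd : (a - b).order ≤ (a ^ k - b ^ k).order := by
    rw [hq]; exact le_self_add.trans le_order_mul
  calc (a - b).order + 1 ≤ c.order + (a ^ k - b ^ k).order := by
        rw [add_comm]; exact add_le_add (one_le_order_iff_constCoeff_eq_zero.2 hc) hdvd
    _ ≤ (c * (a ^ k - b ^ k)).order := le_order_mul

theorem coeff_fixedPointMap_congr (S : MvPowerSeries σ R) {T : ℕ → MvPowerSeries σ R}
    (hT : ∀ n, constantCoeff (T n) = 0) {a b : MvPowerSeries σ R} {d : σ →₀ ℕ}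
    (h : ∀ e : σ →₀ ℕ, e.degree < d.degree → coeff e a = coeff e b) :
    coeff d (fixedPointMap S T a) = coeff d (fixedPointMap S T b) := by
  have hab : (d.degree : ℕ∞) ≤ (a - b).order :=
    nat_le_order fun e he ↦ by rw [map_sub, h e he, sub_self]
  rw [fixedPointMap, fixedPointMap, map_add, map_add, coeff_degreeSum, coeff_degreeSum,
    add_right_inj]
  refine sum_congr rfl fun n _ ↦ ?_
  rw [← sub_eq_zero, ← map_sub, ← mul_sub]
  exact coeff_of_lt_order <| (ENat.natCast_lt_add_one_iff.2 hab).trans_le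
    (add_one_le_order_mul_pow_sub_pow (hT n) a b _)

theorem existsUnique_isFixedPt_fixedPointMap (S : MvPowerSeries σ R)
    {T : ℕ → MvPowerSeries σ R} (hT : ∀ n, constantCoeff (T n) = 0) :
    ∃! y, Function.IsFixedPt (fixedPointMap S T) y :=
  (InvImage.wf Finsupp.degree wellFounded_lt).existsUnique_isFixedPt (Φ := fixedPointMap S T)
    fun _ _ _ h ↦ coeff_fixedPointMap_congr S hT h

end CommRing

end MvPowerSeries

/-- If `S` and all the `Sₙ` are small (zero constant coefficient), then the fixed
point equation `y = S + ∑_{n ≥ 2} S_{n-2} yⁿ` has a unique small solution `y`. -/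
theorem stmt_8 (M : ℕ) (S : MvPowerSeries (Fin M) ℂ)
    (Sn : ℕ → MvPowerSeries (Fin M) ℂ)
    (hS : MvPowerSeries.constantCoeff S = 0)
    (hSn : ∀ n : ℕ, MvPowerSeries.constantCoeff (Sn n) = 0) :
    ∃! y : MvPowerSeries (Fin M) ℂ,
      MvPowerSeries.constantCoeff y = 0 ∧
      Summable (fun n : ℕ => Sn n * y ^ (n + 2)) ∧
      y = S + ∑' n : ℕ, Sn n * y ^ (n + 2) := by
  -- with this topology on `ℂ`, `WithPiTopology` is the topology of the statement
  let _ : TopologicalSpace ℂ := ⊥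
  have : DiscreteTopology ℂ := ⟨rfl⟩
  refine (existsUnique_congr fun _ ↦ ?_).1
    (MvPowerSeries.existsUnique_isFixedPt_fixedPointMap S hSn)
  exact MvPowerSeries.WithPiTopology.isFixedPt_fixedPointMap_iff Sn hS
end

section
/- Let β, a, b ∈ ℂ. There exists a unique formal power series φ ∈ ℂ[[t]] with zero constant coefficient satisfying the formal identity −t²·φ' + (1 − β t)·φ = t² + a·φ² + b·φ³ in ℂ[[t]], where φ' is the formal derivative. Moreover this φ also has vanishing coefficient of t, i.e. φ = Σ_{k ≥ 2} c_k t^k. -/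
/-!
Rewrite the equation as the fixed-point problem `φ = T φ` with
`T φ = t² + β t φ + t² φ' + a φ² + b φ³`. On series without constant term, `T` is a contraction
for the `t`-adic valuation: if `tⁿ ∣ f - g` then `tⁿ⁺¹ ∣ T f - T g`, since every term of `T`
either carries an extra factor `t` or is a power of `φ` of degree at least two. Hence `T` has
exactly one fixed point there, the limit of the iterates `Tᵏ 0`, and it is divisible by `t²`
because `T` maps `t R⟦t⟧` into `t² R⟦t⟧`.
-/

open PowerSeries Function

namespace PowerSeries

variable {R : Type*} [CommRing R]

theorem eq_zero_of_forall_X_pow_dvd {f : R⟦X⟧} (h : ∀ n, (X : R⟦X⟧) ^ n ∣ f) : f = 0 := by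
  ext n
  exact X_pow_dvd_iff.mp (h (n + 1)) n n.lt_succ_self

section Contraction

variable {T : R⟦X⟧ → R⟦X⟧}
  (hT : ∀ f g n, X ∣ f → X ∣ g → X ^ n ∣ f - g → X ^ (n + 1) ∣ T f - T g)
include hT

theorem eq_of_isFixedPt_of_X_pow_succ_dvd_sub {f g : R⟦X⟧} (hf : X ∣ f) (hg : X ∣ g)
    (hTf : IsFixedPt T f) (hTg : IsFixedPt T g) : f = g := by
  have hdvd : ∀ n, (X : R⟦X⟧) ^ n ∣ f - g := by
    intro n
    induction n with
    | zero => exact one_dvd _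
    | succ n ih => simpa only [hTf.eq, hTg.eq] using hT f g n hf hg ih
  exact sub_eq_zero.mp (eq_zero_of_forall_X_pow_dvd hdvd)

theorem exists_isFixedPt_of_X_pow_succ_dvd_sub (hTX : ∀ f, X ∣ f → X ∣ T f) :
    ∃ f, X ∣ f ∧ IsFixedPt T f := by
  set u : ℕ → R⟦X⟧ := fun k => T^[k] 0
  have hu_succ (k : ℕ) : u (k + 1) = T (u k) := Function.iterate_succ_apply' T k 0
  have hu_dvd (k : ℕ) : X ∣ u k := by
    induction k with
    | zero => exact dvd_zero _
    | succ k ih => rw [hu_succ]; exact hTX _ ih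
  have hu_step (k : ℕ) : X ^ k ∣ u (k + 1) - u k := by
    induction k with
    | zero => exact one_dvd _
    | succ k ih =>
      simpa only [hu_succ] using hT _ _ k (hu_dvd (k + 1)) (hu_dvd k) ih
  have hu_cauchy {k m : ℕ} (hkm : k ≤ m) : X ^ k ∣ u m - u k := by
    induction m, hkm using Nat.le_induction with
    | base => simp
    | succ m hkm ih =>
      rw [← sub_add_sub_cancel]
      exact dvd_add ((pow_dvd_pow X hkm).trans (hu_step m)) ih
  -- the `k`-th coefficient of `u m` is frozen once `m > k`
  set φ : R⟦X⟧ := mk fun k => coeff k (u (k + 1)) with hφ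
  have hφ_sub (n : ℕ) : X ^ n ∣ φ - u n := by
    refine X_pow_dvd_iff.mpr fun k hk => ?_
    have hk_frozen := X_pow_dvd_iff.mp (hu_cauchy hk) k k.lt_succ_self
    rw [map_sub] at hk_frozen
    rw [map_sub, hφ, coeff_mk]
    linear_combination -hk_frozen
  have hφ_dvd : X ∣ φ := by
    have h := dvd_add (hφ_sub 1) ((pow_one (X : R⟦X⟧)).symm ▸ hu_dvd 1)
    rwa [sub_add_cancel, pow_one] at h
  refine ⟨φ, hφ_dvd, sub_eq_zero.mp (eq_zero_of_forall_X_pow_dvd fun n => ?_)⟩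
  cases n with
  | zero => exact one_dvd _
  | succ n =>
    have h := dvd_sub (hT φ (u n) n hφ_dvd (hu_dvd n) (hφ_sub n)) (hφ_sub (n + 1))
    rwa [← hu_succ, sub_sub_sub_cancel_right] at h

end Contraction

theorem X_pow_succ_dvd_X_sq_mul_derivative {f : R⟦X⟧} {n : ℕ} (hf : X ^ n ∣ f) :
    X ^ (n + 1) ∣ X ^ 2 * d⁄dX R f := by
  rw [X_pow_dvd_iff] at hf ⊢
  intro m hm
  rw [coeff_X_pow_mul']
  split_ifs
  · rw [coeff_derivative, hf (m - 2 + 1) (by omega), zero_mul]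
  · rfl

end PowerSeries

section ModelEquation

variable {R : Type*} [CommRing R]

noncomputable def modelMap (β a b : R) (φ : R⟦X⟧) : R⟦X⟧ :=
  X ^ 2 + C β * X * φ + X ^ 2 * d⁄dX R φ + C a * φ ^ 2 + C b * φ ^ 3

theorem modelEquation_iff (β a b : R) (φ : R⟦X⟧) :
    -(X ^ 2) * d⁄dX R φ + (1 - C β * X) * φ = X ^ 2 + C a * φ ^ 2 + C b * φ ^ 3 ↔
      modelMap β a b φ = φ := by
  rw [modelMap]
  constructor <;> intro h <;> linear_combination -h

theorem X_pow_succ_dvd_modelMap_sub {β a b : R} {f g : R⟦X⟧} {n : ℕ} (hf : X ∣ f) (hg : X ∣ g)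
    (hfg : X ^ n ∣ f - g) : X ^ (n + 1) ∣ modelMap β a b f - modelMap β a b g := by
  have hsum : X ∣ f + g := dvd_add hf hg
  have hsq : X ∣ f ^ 2 + f * g + g ^ 2 :=
    dvd_add (dvd_add (dvd_pow hf two_ne_zero) (dvd_mul_of_dvd_left hf g)) (dvd_pow hg two_ne_zero)
  have hdiff : modelMap β a b f - modelMap β a b g = C β * (X * (f - g)) + X ^ 2 * d⁄dX R (f - g)
      + C a * ((f - g) * (f + g)) + C b * ((f - g) * (f ^ 2 + f * g + g ^ 2)) := by
    rw [modelMap, modelMap, map_sub]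
    ring
  rw [hdiff]
  refine dvd_add (dvd_add (dvd_add ?_ (X_pow_succ_dvd_X_sq_mul_derivative hfg)) ?_) ?_ <;>
    refine dvd_mul_of_dvd_right ?_ _
  · exact pow_succ' (X : R⟦X⟧) n ▸ mul_dvd_mul_left X hfg
  · exact pow_succ (X : R⟦X⟧) n ▸ mul_dvd_mul hfg hsum
  · exact pow_succ (X : R⟦X⟧) n ▸ mul_dvd_mul hfg hsq

theorem X_sq_dvd_modelMap (β a b : R) {f : R⟦X⟧} (hf : X ∣ f) : X ^ 2 ∣ modelMap β a b f := by
  have hf2 : X ^ 2 ∣ f ^ 2 := pow_dvd_pow_of_dvd hf 2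
  have hf3 : X ^ 2 ∣ f ^ 3 := (pow_dvd_pow X (by norm_num)).trans (pow_dvd_pow_of_dvd hf 3)
  refine dvd_add (dvd_add (dvd_add (dvd_add dvd_rfl ?_) (dvd_mul_right _ _)) ?_) ?_
  · rw [mul_assoc, sq]
    exact dvd_mul_of_dvd_right (mul_dvd_mul_left X hf) _
  · exact dvd_mul_of_dvd_right hf2 _
  · exact dvd_mul_of_dvd_right hf3 _

end ModelEquation

/-- There is a unique formal power series `φ ∈ ℂ[[t]]` with zero constant term
satisfying `-t² φ' + (1 - β t) φ = t² + a φ² + b φ³`; moreover its coefficient of `t`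
also vanishes, i.e. `φ = ∑_{k ≥ 2} c_k t^k`.  (This is the unique formal power series
solution of `f' + (1 - β/x) f = x⁻² + a f² + b f³` under `t = 1/x`.) -/
theorem stmt_10 (β a b : ℂ) :
    (∃! φ : PowerSeries ℂ, constantCoeff φ = 0 ∧
      -(X ^ 2) * derivativeFun φ + (1 - C β * X) * φ
        = X ^ 2 + C a * φ ^ 2 + C b * φ ^ 3) ∧
    (∀ φ : PowerSeries ℂ, constantCoeff φ = 0 →
      -(X ^ 2) * derivativeFun φ + (1 - C β * X) * φ
        = X ^ 2 + C a * φ ^ 2 + C b * φ ^ 3 →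
      coeff 1 φ = 0) := by
  have hT : ∀ f g n, X ∣ f → X ∣ g → X ^ n ∣ f - g →
      X ^ (n + 1) ∣ modelMap β a b f - modelMap β a b g :=
    fun _ _ _ => X_pow_succ_dvd_modelMap_sub
  have hTX (f : ℂ⟦X⟧) (hf : X ∣ f) : X ∣ modelMap β a b f :=
    (dvd_pow_self X two_ne_zero).trans (X_sq_dvd_modelMap β a b hf)
  have hderiv (φ : ℂ⟦X⟧) : derivativeFun φ = d⁄dX ℂ φ := rfl
  simp only [hderiv, modelEquation_iff, ← X_dvd_iff]
  refine ⟨?_, fun φ hφ hfix => ?_⟩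
  · obtain ⟨φ, hφ, hfix⟩ := exists_isFixedPt_of_X_pow_succ_dvd_sub hT hTX
    exact ⟨φ, ⟨hφ, hfix⟩, fun ψ ⟨hψ, hψfix⟩ =>
      eq_of_isFixedPt_of_X_pow_succ_dvd_sub hT hψ hφ hψfix hfix⟩
  · rw [← hfix]
    exact X_pow_dvd_iff.mp (X_sq_dvd_modelMap β a b hφ) 1 one_lt_two
end

section
/- Let β, a, b ∈ ℝ and x₀ > 0. Suppose f₁, f₂ : (x₀, ∞) → ℝ are differentiable, both satisfy f'(x) + (1 − β/x) f(x) = x^{−2} + a f(x)² + b f(x)³ for all x > x₀, and both tend to 0 as x → ∞. Then the limit C := lim_{x→∞} (f₁(x) − f₂(x)) eˣ x^{−β} exists in ℝ (so f₁ − f₂ = C e^{−x} x^{β}(1 + o(1))), and if C = 0 then f₁ = f₂ on (x₁, ∞) for some x₁ ≥ x₀. -/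
/-!
The difference `g = f₁ - f₂` solves the linear equation `g' = (q - 1 + β/x) g` with
`q = a (f₁ + f₂) + b (f₁² + f₁ f₂ + f₂²)`, so `g eˣ x^{-β} = c · exp (∫_{x₁}^x q)`, and the limit
exists once `q` is integrable at `∞`; `C = 0` forces `c = 0`.

Integrability of `q` reduces to that of each decaying solution `f`. Once `|f|` is small and `x` is
large, `2 f f' + f² ≤ 2 x⁻⁴ ≤ (4 x⁻⁴)' + 4 x⁻⁴`, so the energy `(f² - 4 x⁻⁴) eˣ` is nonincreasing,
which yields `|f| ≤ M e^{-x/2} + 2 x⁻²`.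
-/

open Filter Real Set MeasureTheory Topology

noncomputable def modelField (β a b x y : ℝ) : ℝ :=
  (x ^ 2)⁻¹ + a * y ^ 2 + b * y ^ 3 - (1 - β / x) * y

def quadCubicSlope (a b y z : ℝ) : ℝ := a * (y + z) + b * (y ^ 2 + y * z + z ^ 2)

lemma modelField_sub_modelField (β a b x y z : ℝ) :
    modelField β a b x y - modelField β a b x z =
      (quadCubicSlope a b y z - 1 + β / x) * (y - z) := by
  unfold modelField quadCubicSlope; ring

lemma two_mul_modelField_add_sq_le {β a b x y δ : ℝ} (hδ : δ ≤ 1)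
    (hδab : (|a| + |b|) * δ ≤ 1 / 8) (hy : |y| ≤ δ) (hx : 0 < x) (hβx : 8 * |β| ≤ x) :
    2 * y * modelField β a b x y + y ^ 2 ≤ 2 / x ^ 4 := by
  have hcross : 2 * y * (x ^ 2)⁻¹ ≤ y ^ 2 / 2 + 2 / x ^ 4 := by
    have : 2 / x ^ 4 = 2 * ((x ^ 2)⁻¹) ^ 2 := by field_simp
    nlinarith [sq_nonneg (y - 2 * (x ^ 2)⁻¹)]
  have hcubic : a * y ^ 3 ≤ |a| * δ * y ^ 2 := by
    have : a * y ≤ |a| * δ := (le_abs_self _).trans (by rw [abs_mul]; gcongr)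
    nlinarith [sq_nonneg y]
  have hquartic : b * y ^ 4 ≤ |b| * δ * y ^ 2 := by
    have : b * y ^ 2 ≤ |b| * δ := by
      have : y ^ 2 ≤ δ := by nlinarith [abs_nonneg y, sq_abs y]
      nlinarith [le_abs_self b, abs_nonneg b, sq_nonneg y]
    nlinarith [sq_nonneg y]
  have hlinear : β / x * y ^ 2 ≤ 1 / 8 * y ^ 2 := by
    have : β / x ≤ 1 / 8 := by rw [div_le_iff₀ hx]; linarith [le_abs_self β]
    exact mul_le_mul_of_nonneg_right this (sq_nonneg y)
  have : (|a| * δ + |b| * δ) * y ^ 2 ≤ 1 / 8 * y ^ 2 :=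
    mul_le_mul_of_nonneg_right (by linarith) (sq_nonneg y)
  unfold modelField
  nlinarith

lemma antitoneOn_energy {β a b δ x₂ : ℝ} {f : ℝ → ℝ} (hδ : δ ≤ 1)
    (hδab : (|a| + |b|) * δ ≤ 1 / 8) (h8 : 8 ≤ x₂) (hβ : 8 * |β| ≤ x₂)
    (hf : ∀ x ∈ Ici x₂, HasDerivAt f (modelField β a b x (f x)) x)
    (hsmall : ∀ x ∈ Ici x₂, |f x| ≤ δ) :
    AntitoneOn (fun x => (f x ^ 2 - 4 / x ^ 4) * exp x) (Ici x₂) := by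
  have hG : ∀ x ∈ Ici x₂, HasDerivAt (fun x => (f x ^ 2 - 4 / x ^ 4) * exp x)
      ((2 * f x * modelField β a b x (f x) + f x ^ 2 + 16 / x ^ 5 - 4 / x ^ 4) * exp x) x := by
    intro x hx
    have hx0 : x ≠ 0 := by linarith [mem_Ici.1 hx]
    have := (((hf x hx).pow 2).sub ((hasDerivAt_const x 4).div (hasDerivAt_pow 4 x)
      (pow_ne_zero 4 hx0))).mul (hasDerivAt_exp x)
    refine this.congr_deriv ?_
    simp only [Pi.sub_apply, Pi.div_apply, Pi.pow_apply]
    field_simp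
    ring
  refine antitoneOn_of_hasDerivWithinAt_nonpos (convex_Ici x₂)
    (fun x hx => (hG x hx).continuousAt.continuousWithinAt)
    (fun x hx => (hG x (interior_subset hx)).hasDerivWithinAt) fun x hx => ?_
  have hx : x₂ ≤ x := interior_subset (s := Ici x₂) hx
  have hx0 : 0 < x := by linarith
  have henergy := two_mul_modelField_add_sq_le hδ hδab (hsmall x hx) hx0 (hβ.trans hx)
  have hdecay : 16 / x ^ 5 ≤ 2 / x ^ 4 := by
    rw [div_le_div_iff₀ (by positivity) (by positivity)]
    nlinarith [pow_pos hx0 4]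
  have : 4 / x ^ 4 = 2 / x ^ 4 + 2 / x ^ 4 := by ring
  exact mul_nonpos_of_nonpos_of_nonneg (by linarith) (exp_pos x).le

lemma exists_abs_le_of_tendsto_zero {β a b x₀ : ℝ} {f : ℝ → ℝ}
    (hf : ∀ x ∈ Ioi x₀, HasDerivAt f (modelField β a b x (f x)) x)
    (hl : Tendsto f atTop (𝓝 0)) :
    ∃ M x₂, x₀ < x₂ ∧ ∀ x ∈ Ici x₂, |f x| ≤ M * exp (-2⁻¹ * x) + 2 / x ^ 2 := by
  set δ : ℝ := (8 * (|a| + |b|) + 1)⁻¹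
  have hδ0 : 0 < δ := by positivity
  have hδ : δ ≤ 1 := inv_le_one_of_one_le₀ (by linarith [abs_nonneg a, abs_nonneg b])
  have hδab : (|a| + |b|) * δ ≤ 1 / 8 := by
    rw [mul_inv_le_iff₀ (by positivity)]; linarith
  obtain ⟨x₂, hx₂⟩ := eventually_atTop.1 <|
    (hl.eventually (Metric.closedBall_mem_nhds 0 hδ0)).and <|
      (eventually_ge_atTop 8).and <| (eventually_ge_atTop (8 * |β|)).and (eventually_gt_atTop x₀)
  obtain ⟨-, h8, hβ, hx₀⟩ := hx₂ x₂ le_rfl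
  have hanti := antitoneOn_energy hδ hδab h8 hβ
    (fun x hx => hf x (hx₀.trans_le hx)) fun x hx => by
      simpa using (hx₂ x hx).1
  refine ⟨|f x₂| * exp (2⁻¹ * x₂), x₂, hx₀, fun x hx => ?_⟩
  have hx0 : 0 < x := by linarith [mem_Ici.1 hx]
  have hE : exp (-2⁻¹ * x) ^ 2 * exp x = 1 := by
    rw [← exp_nat_mul, ← exp_add, ← exp_zero]; push_cast; ring_nf
  have hGx : (f x ^ 2 - 4 / x ^ 4) * exp x ≤ (|f x₂| * exp (2⁻¹ * x₂)) ^ 2 := by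
    calc (f x ^ 2 - 4 / x ^ 4) * exp x ≤ (f x₂ ^ 2 - 4 / x₂ ^ 4) * exp x₂ :=
          hanti self_mem_Ici hx hx
      _ ≤ f x₂ ^ 2 * exp x₂ :=
          mul_le_mul_of_nonneg_right (sub_le_self _ (by positivity)) (exp_pos _).le
      _ = (|f x₂| * exp (2⁻¹ * x₂)) ^ 2 := by
          rw [mul_pow, sq_abs, ← exp_nat_mul]; push_cast; ring_nf
  refine abs_le_of_sq_le_sq ?_ (by positivity)
  have : 4 / x ^ 4 = (2 / x ^ 2) ^ 2 := by ring
  nlinarith [mul_le_mul_of_nonneg_left hGx (sq_nonneg (exp (-2⁻¹ * x))),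
    mul_nonneg (mul_nonneg (abs_nonneg (f x₂)) (exp_pos (2⁻¹ * x₂)).le)
      (mul_nonneg (exp_pos (-2⁻¹ * x)).le (by positivity : (0 : ℝ) ≤ 2 / x ^ 2))]

lemma integrableOn_Ioi_of_abs_le {f : ℝ → ℝ} {A B c x₂ : ℝ} (hx₂ : 0 < x₂) (hc : 0 < c)
    (hf : ContinuousOn f (Ioi x₂)) (hbound : ∀ x ∈ Ioi x₂, |f x| ≤ A * exp (-c * x) + B / x ^ 2) :
    IntegrableOn f (Ioi x₂) := by
  have hpow : IntegrableOn (fun x : ℝ => B / x ^ 2) (Ioi x₂) := by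
    refine IntegrableOn.congr_fun ((integrableOn_Ioi_rpow_of_lt (by norm_num : (-2 : ℝ) < -1)
      hx₂).const_mul B) (fun x hx => ?_) measurableSet_Ioi
    rw [rpow_neg (hx₂.trans hx).le, div_eq_mul_inv, ← rpow_natCast]
    norm_num
  refine Integrable.mono' (((exp_neg_integrableOn_Ioi x₂ hc).const_mul A).add hpow)
    (hf.aestronglyMeasurable measurableSet_Ioi) ?_
  exact ae_restrict_of_forall_mem measurableSet_Ioi hbound

lemma eventually_integrableOn_Ioi_of_tendsto_zero {β a b x₀ : ℝ} {f : ℝ → ℝ}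
    (hf : ∀ x ∈ Ioi x₀, HasDerivAt f (modelField β a b x (f x)) x)
    (hl : Tendsto f atTop (𝓝 0)) :
    ∀ᶠ x₁ in atTop, IntegrableOn f (Ioi x₁) := by
  obtain ⟨M, x₂, hx₀, hbound⟩ := exists_abs_le_of_tendsto_zero hf hl
  filter_upwards [eventually_ge_atTop x₂, eventually_gt_atTop 0] with x₁ hx₁ hx₁0
  refine integrableOn_Ioi_of_abs_le hx₁0 (by norm_num : (0 : ℝ) < 2⁻¹)
    (fun x hx => (hf x ?_).continuousAt.continuousWithinAt) fun x hx => hbound x ?_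
  · exact hx₀.trans_le (hx₁.trans (mem_Ioi.1 hx).le)
  · exact hx₁.trans (mem_Ioi.1 hx).le

lemma exists_eq_const_mul_exp_of_hasDerivAt {g p P : ℝ → ℝ} {s : Set ℝ} (hs : IsOpen s)
    (hs' : IsPreconnected s) (hg : ∀ x ∈ s, HasDerivAt g (p x * g x) x)
    (hP : ∀ x ∈ s, HasDerivAt P (p x) x) :
    ∃ c, ∀ x ∈ s, g x = c * exp (P x) := by
  have hψ : ∀ x ∈ s, HasDerivAt (fun x => g x * exp (-P x)) 0 x := fun x hx =>
    ((hg x hx).mul ((hP x hx).neg.exp)).congr_deriv (by ring)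
  obtain ⟨c, hc⟩ := hs.exists_is_const_of_deriv_eq_zero hs'
    (fun x hx => (hψ x hx).differentiableAt.differentiableWithinAt)
    fun x hx => (hψ x hx).deriv
  refine ⟨c, fun x hx => ?_⟩
  rw [← hc x hx, mul_assoc, ← exp_add, neg_add_cancel, exp_zero, mul_one]

lemma exists_tendsto_mul_exp_mul_rpow_of_hasDerivAt {g q : ℝ → ℝ} {β x₁ : ℝ} (hx₁ : 0 < x₁)
    (hqc : ContinuousOn q (Ioi x₁)) (hqi : IntegrableOn q (Ioi x₁))
    (hg : ∀ x ∈ Ioi x₁, HasDerivAt g ((q x - 1 + β / x) * g x) x) :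
    ∃ C, Tendsto (fun x => g x * exp x * x ^ (-β)) atTop (𝓝 C) ∧
      (C = 0 → ∀ x ∈ Ioi x₁, g x = 0) := by
  set Q : ℝ → ℝ := fun u => ∫ t in x₁..u, q t
  have hQ : ∀ x ∈ Ioi x₁, HasDerivAt Q (q x) x := fun x hx =>
    intervalIntegral.integral_hasDerivAt_right
      ((intervalIntegrable_iff_integrableOn_Ioc_of_le (mem_Ioi.1 hx).le).2
        (hqi.mono_set Ioc_subset_Ioi_self))
      (hqc.stronglyMeasurableAtFilter isOpen_Ioi x hx) (hqc.continuousAt (isOpen_Ioi.mem_nhds hx))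
  obtain ⟨c, hc⟩ := exists_eq_const_mul_exp_of_hasDerivAt (P := fun x => Q x - x + β * log x)
    isOpen_Ioi isPreconnected_Ioi hg fun x hx =>
      (((hQ x hx).sub (hasDerivAt_id x)).add
        ((hasDerivAt_log (hx₁.trans hx).ne').const_mul β)).congr_deriv (by ring)
  have hrep : ∀ x ∈ Ioi x₁, g x * exp x * x ^ (-β) = c * exp (Q x) := by
    intro x hx
    rw [hc x hx, rpow_def_of_pos (hx₁.trans hx), mul_assoc, mul_assoc, ← exp_add, ← exp_add]
    ring_nf
  refine ⟨c * exp (∫ t in Ioi x₁, q t), ?_, fun hC x hx => ?_⟩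
  · refine (((intervalIntegral_tendsto_integral_Ioi x₁ hqi tendsto_id).rexp).const_mul c).congr' ?_
    filter_upwards [eventually_gt_atTop x₁] with x hx
    exact (hrep x hx).symm
  · rw [hc x hx, (mul_eq_zero.1 hC).resolve_right (exp_ne_zero _), zero_mul]

lemma integrableOn_quadCubicSlope {f₁ f₂ : ℝ → ℝ} {s : Set ℝ} (a b : ℝ) (hs : MeasurableSet s)
    (hf₁ : IntegrableOn f₁ s) (hf₂ : IntegrableOn f₂ s) (hb₁ : ∀ x ∈ s, |f₁ x| ≤ 1)
    (hb₂ : ∀ x ∈ s, |f₂ x| ≤ 1) :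
    IntegrableOn (fun x => quadCubicSlope a b (f₁ x) (f₂ x)) s := by
  have h₁ : IntegrableOn (fun x => (a + b * f₁ x) * f₁ x) s :=
    hf₁.bdd_mul (c := |a| + |b|) ((hf₁.aestronglyMeasurable.const_mul b).const_add a)
      (ae_restrict_of_forall_mem hs fun x hx => by
        have := hb₁ x hx
        rw [norm_eq_abs]
        calc |a + b * f₁ x| ≤ |a| + |b| * |f₁ x| := (abs_add_le _ _).trans_eq (by rw [abs_mul])
          _ ≤ |a| + |b| := by nlinarith [abs_nonneg b])
  have h₂ : IntegrableOn (fun x => (a + b * (f₁ x + f₂ x)) * f₂ x) s :=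
    hf₂.bdd_mul (c := |a| + 2 * |b|)
      (((hf₁.aestronglyMeasurable.add hf₂.aestronglyMeasurable).const_mul b).const_add a)
      (ae_restrict_of_forall_mem hs fun x hx => by
        have := abs_add_le (f₁ x) (f₂ x)
        have := hb₁ x hx
        have := hb₂ x hx
        rw [norm_eq_abs]
        calc |a + b * (f₁ x + f₂ x)| ≤ |a| + |b| * |f₁ x + f₂ x| :=
              (abs_add_le _ _).trans_eq (by rw [abs_mul])
          _ ≤ |a| + 2 * |b| := by nlinarith [abs_nonneg b])
  exact (h₁.add h₂).congr_fun (fun x _ => by simp only [quadCubicSlope, Pi.add_apply]; ring) hs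

/-- Any two solutions of `f' + (1 - β/x) f = x⁻² + a f² + b f³` on `(x₀, ∞)` which
tend to `0` at `+∞` differ by `C e^{-x} x^β (1 + o(1))`: the limit
`C = lim (f₁ - f₂) eˣ x^{-β}` exists, and if `C = 0` the two solutions coincide
beyond some point. -/
theorem stmt_11 (β a b x₀ : ℝ) (hx₀ : 0 < x₀) (f₁ f₂ : ℝ → ℝ)
    (h₁ : ∀ x ∈ Set.Ioi x₀, HasDerivAt f₁
      ((x ^ 2)⁻¹ + a * f₁ x ^ 2 + b * f₁ x ^ 3 - (1 - β / x) * f₁ x) x)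
    (h₂ : ∀ x ∈ Set.Ioi x₀, HasDerivAt f₂
      ((x ^ 2)⁻¹ + a * f₂ x ^ 2 + b * f₂ x ^ 3 - (1 - β / x) * f₂ x) x)
    (hl₁ : Tendsto f₁ atTop (nhds 0)) (hl₂ : Tendsto f₂ atTop (nhds 0)) :
    ∃ C : ℝ,
      Tendsto (fun x => (f₁ x - f₂ x) * Real.exp x * x ^ (-β)) atTop (nhds C) ∧
      (C = 0 → ∃ x₁ : ℝ, x₀ ≤ x₁ ∧ ∀ x ∈ Set.Ioi x₁, f₁ x = f₂ x) := by
  obtain ⟨N, hN⟩ := eventually_atTop.1 <|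
    (hl₁.eventually (Metric.closedBall_mem_nhds 0 one_pos)).and
      (hl₂.eventually (Metric.closedBall_mem_nhds 0 one_pos))
  obtain ⟨x₁, ⟨⟨hi₁, hi₂⟩, hNx₁⟩, hx₀x₁⟩ :=
    ((eventually_integrableOn_Ioi_of_tendsto_zero h₁ hl₁).and
      (eventually_integrableOn_Ioi_of_tendsto_zero h₂ hl₂) |>.and (eventually_ge_atTop N) |>.and
      (eventually_gt_atTop x₀)).exists
  have hIoi : Ioi x₁ ⊆ Ioi x₀ := Ioi_subset_Ioi hx₀x₁.le
  have hc₁ : ContinuousOn f₁ (Ioi x₁) := fun x hx =>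
    (h₁ x (hIoi hx)).continuousAt.continuousWithinAt
  have hc₂ : ContinuousOn f₂ (Ioi x₁) := fun x hx =>
    (h₂ x (hIoi hx)).continuousAt.continuousWithinAt
  obtain ⟨C, hC, hC₀⟩ := exists_tendsto_mul_exp_mul_rpow_of_hasDerivAt (hx₀.trans hx₀x₁)
    (q := fun x => quadCubicSlope a b (f₁ x) (f₂ x)) (by unfold quadCubicSlope; fun_prop)
    (integrableOn_quadCubicSlope a b measurableSet_Ioi hi₁ hi₂
      (fun x hx => by simpa using (hN x (hNx₁.trans (mem_Ioi.1 hx).le)).1)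
      (fun x hx => by simpa using (hN x (hNx₁.trans (mem_Ioi.1 hx).le)).2))
    fun x hx => ((h₁ x (hIoi hx)).sub (h₂ x (hIoi hx))).congr_deriv (modelField_sub_modelField ..)
  exact ⟨C, hC, fun h => ⟨x₁, hx₀x₁.le, fun x hx => sub_eq_zero.1 (hC₀ h x hx)⟩⟩
end

section
/- Let a, b ≥ 0. For every ε ∈ (0,1) there exists δ > 0 such that: whenever λ ∈ [0, δ] and (x_k)_{k ≥ 1} is a sequence of nonnegative reals with x₁ ≤ δ and satisfying, for every k ≥ 2, x_k ≤ λ x_k + a Σ_{k₁+k₂ = k, k₁,k₂ ≥ 1} x_{k₁} x_{k₂} + b Σ_{k₁+k₂+k₃ = k, k₁,k₂,k₃ ≥ 1} x_{k₁} x_{k₂} x_{k₃}, then x_k ≤ ε^k for all k ≥ 1. -/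
/-!
Majorant argument with the weight `w r k = r ^ k / k ^ 2`. For `i + j = k` one has
`1 / (i j) = (1 / i + 1 / j) / k`, and since `∑ 1 / i ^ 2 ≤ 2` this makes the convolution of `w r`
with itself at most `8 w r`. Hence the ansatz `x_k ≤ M w_k` survives the recursion: the quadratic
and cubic terms contribute at most `8 a M² w_k` and `64 b M³ w_k`, and after absorbing `λ x_k`
(with `λ ≤ 1/2`) the induction closes as soon as `16 a M + 128 b M² ≤ 1`. Taking `r = ε`,
`M ≤ 1` and `δ = min (1/2) (M ε)` gives `x_k ≤ ε ^ k`.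
-/

open Finset

lemma sum_Ioo_zero_reflect {M : Type*} [AddCommMonoid M] (f : ℕ → M) (k : ℕ) :
    ∑ i ∈ Ioo 0 k, f (k - i) = ∑ i ∈ Ioo 0 k, f i := by
  rw [← Ico_add_one_left_eq_Ioo, sum_Ico_reflect f _ (by omega)]
  congr 2; omega

-- `1 / (u v) = (1 / u + 1 / v) / (u + v)`, then `(p + q)² ≤ 2 (p² + q²)`.
lemma inv_sq_mul_inv_sq_le {u v : ℝ} (hu : 0 < u) (hv : 0 < v) :
    (u ^ 2)⁻¹ * (v ^ 2)⁻¹ ≤ 2 / (u + v) ^ 2 * ((u ^ 2)⁻¹ + (v ^ 2)⁻¹) := by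
  field_simp
  nlinarith [sq_nonneg (u - v)]

lemma sum_Ioo_inv_sq_mul_inv_sq_le (k : ℕ) :
    ∑ i ∈ Ioo 0 k, ((i : ℝ) ^ 2)⁻¹ * (((k - i : ℕ) : ℝ) ^ 2)⁻¹ ≤ 8 / (k : ℝ) ^ 2 := by
  have hterm : ∀ i ∈ Ioo 0 k, ((i : ℝ) ^ 2)⁻¹ * (((k - i : ℕ) : ℝ) ^ 2)⁻¹
      ≤ 2 / (k : ℝ) ^ 2 * (((i : ℝ) ^ 2)⁻¹ + (((k - i : ℕ) : ℝ) ^ 2)⁻¹) := by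
    intro i hi
    obtain ⟨hi0, hik⟩ := mem_Ioo.mp hi
    have hsum : (i : ℝ) + ((k - i : ℕ) : ℝ) = k := by
      rw [Nat.cast_sub hik.le]; ring
    rw [← hsum]
    exact inv_sq_mul_inv_sq_le (by positivity) (by rw [Nat.cast_pos]; omega)
  have hbasel : ∑ i ∈ Ioo 0 k, ((i : ℝ) ^ 2)⁻¹ ≤ 2 := by
    simpa using sum_Ioo_inv_sq_le (α := ℝ) 0 k
  calc _ ≤ ∑ i ∈ Ioo 0 k, 2 / (k : ℝ) ^ 2 * (((i : ℝ) ^ 2)⁻¹ + (((k - i : ℕ) : ℝ) ^ 2)⁻¹) :=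
        sum_le_sum hterm
    _ = 2 / (k : ℝ) ^ 2 * (∑ i ∈ Ioo 0 k, ((i : ℝ) ^ 2)⁻¹ + ∑ i ∈ Ioo 0 k, ((i : ℝ) ^ 2)⁻¹) := by
        rw [← mul_sum, sum_add_distrib, sum_Ioo_zero_reflect (fun j => ((j : ℝ) ^ 2)⁻¹)]
    _ ≤ 2 / (k : ℝ) ^ 2 * (2 + 2) := by gcongr
    _ = 8 / (k : ℝ) ^ 2 := by ring

/-- The `k`-th coefficient of `U V` for power series `U = ∑ u i zⁱ`, `V = ∑ v i zⁱ` whose constant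
terms are discarded. -/
def posConv (u v : ℕ → ℝ) (k : ℕ) : ℝ := ∑ i ∈ Ioo 0 k, u i * v (k - i)

lemma sum_pairs_eq_posConv (u v : ℕ → ℝ) (k : ℕ) :
    ∑ p ∈ (range (k+1) ×ˢ range (k+1)).filter
        (fun p : ℕ × ℕ => p.1 + p.2 = k ∧ 1 ≤ p.1 ∧ 1 ≤ p.2), u p.1 * v p.2
      = posConv u v k := by
  refine (sum_finset_product' _ (Ioo 0 k) (fun i => {k - i}) ?_ (f := fun i j => u i * v j)).trans
    (sum_congr rfl fun i _ => sum_singleton _ _)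
  rintro ⟨i, j⟩
  simp only [mem_filter, mem_product, mem_range, mem_Ioo, mem_singleton]
  omega

lemma sum_triples_eq_posConv (u v w : ℕ → ℝ) (k : ℕ) :
    ∑ p ∈ (range (k+1) ×ˢ range (k+1) ×ˢ range (k+1)).filter
        (fun p : ℕ × ℕ × ℕ => p.1 + p.2.1 + p.2.2 = k ∧ 1 ≤ p.1 ∧ 1 ≤ p.2.1 ∧ 1 ≤ p.2.2),
        u p.1 * v p.2.1 * w p.2.2
      = posConv u (posConv v w) k := by
  simp_rw [mul_assoc]
  refine (sum_finset_product' _ (Ioo 0 k) (fun i => (range (k - i + 1) ×ˢ range (k - i + 1)).filter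
        (fun p : ℕ × ℕ => p.1 + p.2 = k - i ∧ 1 ≤ p.1 ∧ 1 ≤ p.2)) ?_
      (f := fun i q => u i * (v q.1 * w q.2))).trans
    (sum_congr rfl fun i _ => by rw [← mul_sum, sum_pairs_eq_posConv])
  rintro ⟨i, j, l⟩
  simp only [mem_filter, mem_product, mem_range, mem_Ioo]
  omega

lemma posConv_nonneg {u v : ℕ → ℝ} {k : ℕ} (hu : ∀ i ∈ Ioo 0 k, 0 ≤ u i)
    (hv : ∀ i ∈ Ioo 0 k, 0 ≤ v i) : 0 ≤ posConv u v k :=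
  sum_nonneg fun i hi => mul_nonneg (hu i hi) (hv _ (by simp only [mem_Ioo] at hi ⊢; omega))

lemma posConv_le_posConv {u u' v v' : ℕ → ℝ} {k : ℕ}
    (hu : ∀ i ∈ Ioo 0 k, 0 ≤ u i ∧ u i ≤ u' i) (hv : ∀ i ∈ Ioo 0 k, 0 ≤ v i ∧ v i ≤ v' i) :
    posConv u v k ≤ posConv u' v' k := by
  refine sum_le_sum fun i hi => ?_
  have hki : k - i ∈ Ioo 0 k := by simp only [mem_Ioo] at hi ⊢; omega
  obtain ⟨hu0, hu'⟩ := hu i hi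
  obtain ⟨hv0, hv'⟩ := hv _ hki
  exact mul_le_mul hu' hv' hv0 (hu0.trans hu')

lemma posConv_const_mul (A B : ℝ) (u v : ℕ → ℝ) (k : ℕ) :
    posConv (fun i => A * u i) (fun i => B * v i) k = A * B * posConv u v k := by
  simp only [posConv, mul_sum]
  exact sum_congr rfl fun i _ => by ring

noncomputable def geomInvSq (r : ℝ) (k : ℕ) : ℝ := r ^ k / (k : ℝ) ^ 2

lemma geomInvSq_nonneg {r : ℝ} (hr : 0 ≤ r) (k : ℕ) : 0 ≤ geomInvSq r k := by
  unfold geomInvSq; positivity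

lemma geomInvSq_le_pow {r : ℝ} (hr : 0 ≤ r) {k : ℕ} (hk : 0 < k) : geomInvSq r k ≤ r ^ k :=
  div_le_self (pow_nonneg hr k) (one_le_pow₀ (by exact_mod_cast hk))

lemma posConv_geomInvSq_le {r : ℝ} (hr : 0 ≤ r) (k : ℕ) :
    posConv (geomInvSq r) (geomInvSq r) k ≤ 8 * geomInvSq r k := by
  have hterm : ∀ i ∈ Ioo 0 k, geomInvSq r i * geomInvSq r (k - i)
      = r ^ k * (((i : ℝ) ^ 2)⁻¹ * (((k - i : ℕ) : ℝ) ^ 2)⁻¹) := by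
    intro i hi
    rw [geomInvSq, geomInvSq, ← pow_mul_pow_sub r (mem_Ioo.mp hi).2.le]
    ring
  calc posConv (geomInvSq r) (geomInvSq r) k
      = r ^ k * ∑ i ∈ Ioo 0 k, ((i : ℝ) ^ 2)⁻¹ * (((k - i : ℕ) : ℝ) ^ 2)⁻¹ := by
        rw [posConv, sum_congr rfl hterm, mul_sum]
    _ ≤ r ^ k * (8 / (k : ℝ) ^ 2) := by gcongr; exact sum_Ioo_inv_sq_mul_inv_sq_le k
    _ = 8 * geomInvSq r k := by rw [geomInvSq]; ring

lemma posConv_le_of_le_geomInvSq {u v : ℕ → ℝ} {A B r : ℝ} {k : ℕ} (hA : 0 ≤ A) (hB : 0 ≤ B)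
    (hr : 0 ≤ r) (hu : ∀ i ∈ Ioo 0 k, 0 ≤ u i ∧ u i ≤ A * geomInvSq r i)
    (hv : ∀ i ∈ Ioo 0 k, 0 ≤ v i ∧ v i ≤ B * geomInvSq r i) :
    posConv u v k ≤ 8 * A * B * geomInvSq r k :=
  calc posConv u v k ≤ A * B * posConv (geomInvSq r) (geomInvSq r) k := by
        rw [← posConv_const_mul]; exact posConv_le_posConv hu hv
    _ ≤ A * B * (8 * geomInvSq r k) := by gcongr; exact posConv_geomInvSq_le hr k
    _ = 8 * A * B * geomInvSq r k := by ring

theorem le_mul_geomInvSq_of_le_posConv {a b lam M r : ℝ} {x : ℕ → ℝ} (ha : 0 ≤ a)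
    (hb : 0 ≤ b) (hlam : lam ≤ 1 / 2) (hM : 0 ≤ M) (hMab : 16 * a * M + 128 * b * M ^ 2 ≤ 1)
    (hr : 0 ≤ r) (hx : ∀ k, 0 ≤ x k) (hx1 : x 1 ≤ M * r)
    (hrec : ∀ k, 2 ≤ k → x k ≤ lam * x k + a * posConv x x k + b * posConv x (posConv x x) k) :
    ∀ k, 0 < k → x k ≤ M * geomInvSq r k := by
  intro k
  induction k using Nat.strong_induction_on with
  | _ k ih =>
  intro hk
  obtain rfl | hk2 : k = 1 ∨ 2 ≤ k := by omega
  · simpa [geomInvSq] using hx1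
  have hx_le : ∀ i ∈ Ioo 0 k, 0 ≤ x i ∧ x i ≤ M * geomInvSq r i :=
    fun i hi => ⟨hx i, ih i (mem_Ioo.mp hi).2 (mem_Ioo.mp hi).1⟩
  have hsq_le : ∀ m ∈ Ioo 0 k,
      0 ≤ posConv x x m ∧ posConv x x m ≤ 8 * M * M * geomInvSq r m := by
    intro m hm
    have hx_le' : ∀ i ∈ Ioo 0 m, 0 ≤ x i ∧ x i ≤ M * geomInvSq r i := fun i hi =>
      hx_le i (by simp only [mem_Ioo] at hi hm ⊢; omega)
    exact ⟨posConv_nonneg (fun i _ => hx i) (fun i _ => hx i),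
      posConv_le_of_le_geomInvSq hM hM hr hx_le' hx_le'⟩
  have hquad := posConv_le_of_le_geomInvSq hM hM hr hx_le hx_le
  have hcubic := posConv_le_of_le_geomInvSq hM (by positivity) hr hx_le hsq_le
  calc x k ≤ 2 * (a * posConv x x k + b * posConv x (posConv x x) k) := by
        linarith [hrec k hk2, mul_le_mul_of_nonneg_right hlam (hx k)]
    _ ≤ 2 * (a * (8 * M * M * geomInvSq r k) + b * (8 * M * (8 * M * M) * geomInvSq r k)) := by
        gcongr
    _ = (16 * a * M + 128 * b * M ^ 2) * (M * geomInvSq r k) := by ring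
    _ ≤ M * geomInvSq r k := mul_le_of_le_one_left (mul_nonneg hM (geomInvSq_nonneg hr k)) hMab

/-- Majorization lemma: for every `ε ∈ (0,1)` there is `δ > 0` such that any
nonnegative sequence with `x₁ ≤ δ` satisfying, for `k ≥ 2`,
`x_k ≤ λ x_k + a ∑_{k₁+k₂=k, kᵢ≥1} x_{k₁} x_{k₂} + b ∑_{k₁+k₂+k₃=k, kᵢ≥1} x_{k₁} x_{k₂} x_{k₃}`
with `0 ≤ λ ≤ δ`, obeys the geometric bound `x_k ≤ ε^k` for all `k ≥ 1`. -/
theorem stmt_17 (a b : ℝ) (ha : 0 ≤ a) (hb : 0 ≤ b) :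
    ∀ ε ∈ Set.Ioo (0:ℝ) 1, ∃ δ : ℝ, 0 < δ ∧
      ∀ lam ∈ Set.Icc (0:ℝ) δ, ∀ x : ℕ → ℝ,
        (∀ k : ℕ, 0 ≤ x k) → x 1 ≤ δ →
        (∀ k : ℕ, 2 ≤ k →
          x k ≤ lam * x k
            + a * ∑ p ∈ (range (k+1) ×ˢ range (k+1)).filter
                (fun p : ℕ × ℕ => p.1 + p.2 = k ∧ 1 ≤ p.1 ∧ 1 ≤ p.2),
                x p.1 * x p.2
            + b * ∑ p ∈ (range (k+1) ×ˢ range (k+1) ×ˢ range (k+1)).filter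
                (fun p : ℕ × ℕ × ℕ =>
                  p.1 + p.2.1 + p.2.2 = k ∧ 1 ≤ p.1 ∧ 1 ≤ p.2.1 ∧ 1 ≤ p.2.2),
                x p.1 * x p.2.1 * x p.2.2) →
        ∀ k : ℕ, 1 ≤ k → x k ≤ ε ^ k := by
  rintro ε ⟨hε0, -⟩
  set M : ℝ := 1 / (16 * a + 128 * b + 1) with hM_def
  have hM0 : 0 < M := by positivity
  have hM1 : M ≤ 1 := by rw [hM_def, div_le_one (by positivity)]; linarith
  have hMab : 16 * a * M + 128 * b * M ^ 2 ≤ 1 :=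
    calc 16 * a * M + 128 * b * M ^ 2 ≤ (16 * a + 128 * b + 1) * M := by
          nlinarith [mul_le_mul_of_nonneg_left (pow_le_of_le_one hM0.le hM1 two_ne_zero) hb]
      _ = 1 := by rw [hM_def]; field_simp
  refine ⟨min (1 / 2) (M * ε), by positivity, ?_⟩
  intro lam hlam x hx hx1 hrec k hk
  simp_rw [sum_pairs_eq_posConv, sum_triples_eq_posConv] at hrec
  calc x k ≤ M * geomInvSq ε k :=
        le_mul_geomInvSq_of_le_posConv ha hb (hlam.2.trans (min_le_left _ _)) hM0.le hMab
          hε0.le hx (hx1.trans (min_le_right _ _)) hrec k hk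
    _ ≤ 1 * ε ^ k :=
        mul_le_mul hM1 (geomInvSq_le_pow hε0.le hk) (geomInvSq_nonneg hε0.le k) zero_le_one
    _ = ε ^ k := one_mul _
end
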